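/- Pointwise index form identity (Wylie): let γ be a unit-speed geodesic in (M,g), φ ∈ C^∞(M), c(t) := g(∇φ(γ(t)), γ'(t)), and X a smooth vector field along γ perpendicular to γ'. Then |X'(t)|² − g(R(X,γ')γ', X) = |X'(t) − c(t)X(t)|² − g(R^{∇^φ}(X,γ')γ', X) + (d/dt)(c(t)|X(t)|²), where R^{∇^φ} is the curvature tensor of the Wylie-Yeroshkin connection ∇^φ, provided the curvature relation g(R^{∇^φ}(X,γ')γ',X) = g(R(X,γ')γ',X) + (Hess φ(γ',γ') + c(t)²)|X|² holds for X ⊥ γ'. -/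

import Mathlib

/-- Pointwise index form identity (Wylie, Proposition 3.1): along a unit-speed
geodesic `γ`, with `c(t) = g(∇φ(γ(t)), γ'(t))` (so `c' = Hess φ(γ',γ')`), a
normal field `X` with covariant derivative `DX`, and the curvature relation
`g(R^{∇^φ}(X,γ')γ',X) = g(R(X,γ')γ',X) + (Hess φ(γ',γ') + c²)|X|²`, one has
`|X'|² − g(R(X,γ')γ',X) = |X'−cX|² − g(R^{∇^φ}(X,γ')γ',X) + (c|X|²)'`.
Here `q t = g(R(X,γ')γ',X)(t)`, `qφ t = g(R^{∇^φ}(X,γ')γ',X)(t)`,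
`h t = Hess φ(γ',γ')(t)`, and metric compatibility of the covariant derivative is
the hypothesis `hmetric`. -/
theorem stmt_16 {E : Type*} [NormedAddCommGroup E] [InnerProductSpace ℝ E]
    (X DX : ℝ → E) (c h q qφ : ℝ → ℝ) (t : ℝ)
    (hmetric : ∀ s, HasDerivAt (fun r => ‖X r‖ ^ 2)
      (2 * (inner ℝ (DX s) (X s) : ℝ)) s)
    (hc : ∀ s, HasDerivAt c (h s) s)
    (hcurv : ∀ s, qφ s = q s + (h s + (c s) ^ 2) * ‖X s‖ ^ 2) :
    ‖DX t‖ ^ 2 - q t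
      = ‖DX t - c t • X t‖ ^ 2 - qφ t + deriv (fun s => c s * ‖X s‖ ^ 2) t := by
  have hd : HasDerivAt (fun s => c s * ‖X s‖ ^ 2)
      (h t * ‖X t‖ ^ 2 + c t * (2 * (inner ℝ (DX t) (X t) : ℝ))) t :=
    (hc t).mul (hmetric t)
  rw [hd.deriv, hcurv t]
  have hexp : ‖DX t - c t • X t‖ ^ 2
      = ‖DX t‖ ^ 2 - 2 * (c t * (inner ℝ (DX t) (X t) : ℝ)) + (c t) ^ 2 * ‖X t‖ ^ 2 := by
    rw [norm_sub_sq_real, real_inner_smul_right, norm_smul]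
    simp [mul_pow, abs_mul_abs_self]
  rw [hexp]; ring
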